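/- Let A ∈ ℂ^{n×n}, let (W, R, w', r) be an Arnoldi-like decomposition of order m ≥ 1 for A, let α ∈ ℂ and set b := α·(W·e_1). Then for every polynomial q ∈ ℂ[X] of degree at most m − 1, q(A)·b = α·(W·(q(R)·e_1)), where q(A) and q(R) denote evaluation of the polynomial q at the matrices A and R, and e_1 is the first standard basis vector of ℂ^m. -/

import Mathlib

private lemma sum_mulVec_aux {ι k l : Type*} [Fintype l] (s : Finset ι)
    (f : ι → Matrix k l ℂ) (v : l → ℂ) :
    (∑ i ∈ s, f i).mulVec v = ∑ i ∈ s, (f i).mulVec v := by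
  classical
  induction s using Finset.induction with
  | empty => simp
  | insert a s h ih => simp [Finset.sum_insert h, Matrix.add_mulVec, ih]

private lemma mulVec_sum_aux {ι k l : Type*} [Fintype l] (s : Finset ι)
    (M : Matrix k l ℂ) (f : ι → l → ℂ) :
    M.mulVec (∑ i ∈ s, f i) = ∑ i ∈ s, M.mulVec (f i) := by
  classical
  induction s using Finset.induction with
  | empty => simp
  | insert a s h ih => simp [Finset.sum_insert h, Matrix.mulVec_add, ih]

/-- If `(W, R, w', r)` is an Arnoldi-like decomposition of order `m ≥ 1`
for `A ∈ ℂ^{n×n}` and `b = α·W·e₁`, then for every polynomial `q` of degree at most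
`m - 1`, `q(A)·b = α·W·q(R)·e₁`. -/
theorem arnoldi_like_polynomial_exactness {n m : ℕ} (hm : 1 ≤ m)
    (A : Matrix (Fin n) (Fin n) ℂ) (W : Matrix (Fin n) (Fin m) ℂ)
    (R : Matrix (Fin m) (Fin m) ℂ) (w' : Fin n → ℂ) (r : ℂ)
    (hR : ∀ i j : Fin m, (j : ℕ) + 1 < (i : ℕ) → R i j = 0)
    (hdec : A * W = W * R + r • Matrix.vecMulVec w' (Pi.single (⟨m - 1, by omega⟩ : Fin m) 1))
    (α : ℂ) (b : Fin n → ℂ)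
    (hb : b = α • W.mulVec (Pi.single (⟨0, by omega⟩ : Fin m) 1)) :
    ∀ q : Polynomial ℂ, q.natDegree ≤ m - 1 →
      (Polynomial.aeval A q).mulVec b =
        α • W.mulVec ((Polynomial.aeval R q).mulVec (Pi.single (⟨0, by omega⟩ : Fin m) 1)) := by
  intro q hq
  set e1 : Fin m → ℂ := Pi.single (⟨0, by omega⟩ : Fin m) 1 with he1
  -- support of R^k e₁
  have hsupp : ∀ k : ℕ, ∀ j : Fin m, k < (j : ℕ) → ((R ^ k).mulVec e1) j = 0 := by
    intro k
    induction k with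
    | zero =>
      intro j hj
      rw [pow_zero, Matrix.one_mulVec]
      exact Pi.single_eq_of_ne (by exact fun h => by simp [Fin.ext_iff] at h; omega) 1
    | succ k ih =>
      intro j hj
      rw [pow_succ', ← Matrix.mulVec_mulVec]
      rw [show R.mulVec ((R ^ k).mulVec e1) j
          = ∑ l, R j l * ((R ^ k).mulVec e1) l from rfl]
      apply Finset.sum_eq_zero
      intro l _
      by_cases hl : k < (l : ℕ)
      · rw [ih l hl, mul_zero]
      · rw [hR j l (by omega), zero_mul]
  have key : ∀ k : ℕ, k ≤ m - 1 →
      (A ^ k).mulVec (W.mulVec e1) = W.mulVec ((R ^ k).mulVec e1) := by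
    intro k
    induction k with
    | zero => intro _; simp
    | succ k ih =>
      intro hk
      have hk' : k ≤ m - 1 := by omega
      have hz : ((R ^ k).mulVec e1) ⟨m - 1, by omega⟩ = 0 := hsupp k _ (by simp; omega)
      rw [pow_succ', pow_succ', ← Matrix.mulVec_mulVec, ih hk', Matrix.mulVec_mulVec, hdec,
        ← Matrix.mulVec_mulVec (v := e1) (M := R) (N := R ^ k)]
      conv_rhs => rw [Matrix.mulVec_mulVec]
      rw [Matrix.add_mulVec, Matrix.smul_mulVec]
      have hvv : (Matrix.vecMulVec w' (Pi.single (⟨m - 1, by omega⟩ : Fin m) 1)).mulVec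
          ((R ^ k).mulVec e1) = 0 := by
        funext i
        simp only [Matrix.mulVec, dotProduct, Matrix.vecMulVec_apply, Pi.zero_apply]
        rw [Finset.sum_eq_zero]
        intro l _
        by_cases hl : l = (⟨m - 1, by omega⟩ : Fin m)
        · rw [hl]
          rw [show (∑ x, (R ^ k) (⟨m - 1, by omega⟩ : Fin m) x * e1 x)
              = ((R ^ k).mulVec e1) ⟨m - 1, by omega⟩ from rfl, hz, mul_zero]
        · rw [Pi.single_eq_of_ne hl, mul_zero, zero_mul]
      rw [hvv, smul_zero, add_zero]
  -- expand polynomial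
  rw [hb, Polynomial.aeval_eq_sum_range (p := q) (x := A),
      Polynomial.aeval_eq_sum_range (p := q) (x := R)]
  rw [sum_mulVec_aux, sum_mulVec_aux, mulVec_sum_aux, Finset.smul_sum]
  refine Finset.sum_congr rfl fun i hi => ?_
  have hi' : i ≤ m - 1 := by
    have := Finset.mem_range.mp hi; omega
  rw [Matrix.smul_mulVec, Matrix.smul_mulVec, Matrix.mulVec_smul,
    Matrix.mulVec_smul, key i hi', smul_comm]
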